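/- arXiv:2604.27475 — 7 statements merged into one kernel-verified Lean document; each statement's English description precedes it below -/
import Mathlib

section
/- Let s, c₁, c₂ be positive real numbers and let a : ℕ → ℝ satisfy 0 ≤ a(n) and c₂·n^s ≤ a(n) ≤ c₁·n^s for all integers n ≥ 1, and fix L ∈ ℕ. Then the ratio (∑_{n = max(1, Λ−L)}^{Λ+L} a(n)) / (∑_{n=1}^{Λ} a(n)) tends to 0 as the integer Λ tends to infinity. -/
/-!
The shell has at most `2L + 1` terms, each at most `c₁ (2Λ)^s`, so it is `O(Λ^s)`. The ball
contains the `≥ Λ/2` terms with index in `(Λ/2, Λ]`, each at least `c₂ (Λ/2)^s`, so it is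
`≳ Λ^(s+1)`. Hence the ratio is `O(1/Λ)`.
-/

open Finset Filter Topology

section PowerBounds

variable {a : ℕ → ℝ} {s c : ℝ}

lemma sum_le_card_mul_rpow (hs : 0 ≤ s) (hc : 0 ≤ c)
    (hup : ∀ n : ℕ, 1 ≤ n → a n ≤ c * (n : ℝ) ^ s) {S : Finset ℕ} {M : ℝ}
    (hS : ∀ n ∈ S, 1 ≤ n ∧ (n : ℝ) ≤ M) :
    ∑ n ∈ S, a n ≤ #S * (c * M ^ s) := by
  rw [← nsmul_eq_mul]
  refine sum_le_card_nsmul _ _ _ fun n hn => (hup n (hS n hn).1).trans ?_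
  gcongr
  exact (hS n hn).2

lemma card_mul_rpow_le_sum (hs : 0 ≤ s) (hc : 0 ≤ c)
    (hlow : ∀ n : ℕ, 1 ≤ n → c * (n : ℝ) ^ s ≤ a n) {S : Finset ℕ} {m : ℝ} (hm : 0 ≤ m)
    (hS : ∀ n ∈ S, 1 ≤ n ∧ m ≤ (n : ℝ)) :
    #S * (c * m ^ s) ≤ ∑ n ∈ S, a n := by
  rw [← nsmul_eq_mul]
  refine card_nsmul_le_sum _ _ _ fun n hn => le_trans ?_ (hlow n (hS n hn).1)
  gcongr
  exact (hS n hn).2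

lemma sum_shell_le (hs : 0 ≤ s) (hc : 0 ≤ c)
    (hup : ∀ n : ℕ, 1 ≤ n → a n ≤ c * (n : ℝ) ^ s) {L Λ : ℕ} (hL : L ≤ Λ) :
    ∑ n ∈ Icc (max 1 (Λ - L)) (Λ + L), a n ≤ (2 * L + 1) * c * 2 ^ s * (Λ : ℝ) ^ s := by
  have hcard : (#(Icc (max 1 (Λ - L)) (Λ + L)) : ℝ) ≤ 2 * L + 1 := by
    rw [Nat.card_Icc]
    exact_mod_cast (by omega : Λ + L + 1 - max 1 (Λ - L) ≤ 2 * L + 1)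
  calc ∑ n ∈ Icc (max 1 (Λ - L)) (Λ + L), a n
      ≤ #(Icc (max 1 (Λ - L)) (Λ + L)) * (c * (2 * (Λ : ℝ)) ^ s) := by
        refine sum_le_card_mul_rpow hs hc hup fun n hn => ?_
        rw [mem_Icc] at hn
        exact ⟨by omega, by exact_mod_cast (by omega : n ≤ 2 * Λ)⟩
    _ ≤ (2 * L + 1) * (c * (2 * (Λ : ℝ)) ^ s) := by gcongr
    _ = (2 * L + 1) * c * 2 ^ s * (Λ : ℝ) ^ s := by
        rw [Real.mul_rpow (by norm_num) (by positivity)]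
        ring

lemma le_sum_ball (hs : 0 ≤ s) (hc : 0 ≤ c) (ha : ∀ n, 0 ≤ a n)
    (hlow : ∀ n : ℕ, 1 ≤ n → c * (n : ℝ) ^ s ≤ a n) (Λ : ℕ) :
    c / (2 * 2 ^ s) * (Λ : ℝ) ^ s * Λ ≤ ∑ n ∈ Icc 1 Λ, a n := by
  have hcard : (Λ : ℝ) / 2 ≤ #(Icc (Λ / 2 + 1) Λ) := by
    rw [Nat.card_Icc, div_le_iff₀ two_pos]
    exact_mod_cast (by omega : Λ ≤ (Λ + 1 - (Λ / 2 + 1)) * 2)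
  calc c / (2 * 2 ^ s) * (Λ : ℝ) ^ s * Λ = (Λ : ℝ) / 2 * (c * ((Λ : ℝ) / 2) ^ s) := by
        rw [Real.div_rpow (by positivity) (by norm_num)]
        field_simp
    _ ≤ #(Icc (Λ / 2 + 1) Λ) * (c * ((Λ : ℝ) / 2) ^ s) := by gcongr
    _ ≤ ∑ n ∈ Icc (Λ / 2 + 1) Λ, a n := by
        refine card_mul_rpow_le_sum hs hc hlow (by positivity) fun n hn => ?_
        rw [mem_Icc] at hn
        refine ⟨by omega, ?_⟩
        rw [div_le_iff₀ two_pos]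
        exact_mod_cast (by omega : Λ ≤ n * 2)
    _ ≤ ∑ n ∈ Icc 1 Λ, a n :=
        sum_le_sum_of_subset_of_nonneg (Icc_subset_Icc_left (by omega)) fun n _ _ => ha n

end PowerBounds

lemma tendsto_div_of_le_mul_rpow_of_mul_rpow_mul_le {f g : ℕ → ℝ} {A B s : ℝ} (hB : 0 < B)
    (hf₀ : ∀ Λ, 0 ≤ f Λ) (hf : ∀ᶠ Λ in atTop, f Λ ≤ A * (Λ : ℝ) ^ s)
    (hg : ∀ Λ : ℕ, B * (Λ : ℝ) ^ s * Λ ≤ g Λ) :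
    Tendsto (fun Λ => f Λ / g Λ) atTop (𝓝 0) := by
  refine tendsto_of_tendsto_of_tendsto_of_le_of_le' tendsto_const_nhds
    (tendsto_const_div_atTop_nhds_zero_nat (A / B)) ?_ ?_
  · filter_upwards with Λ
    have hBΛ : 0 ≤ B * (Λ : ℝ) ^ s * Λ := by positivity
    exact div_nonneg (hf₀ Λ) (hBΛ.trans (hg Λ))
  · filter_upwards [hf, eventually_gt_atTop 0] with Λ hfΛ hΛ
    have hΛ' : (0 : ℝ) < Λ := by exact_mod_cast hΛ
    have hBΛ : 0 < B * (Λ : ℝ) ^ s * Λ := by positivity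
    calc f Λ / g Λ ≤ f Λ / (B * (Λ : ℝ) ^ s * Λ) := div_le_div_of_nonneg_left (hf₀ Λ) hBΛ (hg Λ)
      _ ≤ A * (Λ : ℝ) ^ s / (B * (Λ : ℝ) ^ s * Λ) := by gcongr
      _ = A / B / Λ := by field_simp

/-- If `a : ℕ → ℝ` is nonnegative and comparable to `n^s`
(`c₂ n^s ≤ a n ≤ c₁ n^s` for `n ≥ 1`, with `s, c₁, c₂ > 0`), then for every
fixed width `L ∈ ℕ` the ratio of the shell sum `∑_{n = max(1, Λ−L)}^{Λ+L} a n`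
to the ball sum `∑_{n=1}^{Λ} a n` tends to `0` as `Λ → ∞`. -/
theorem stmt_3 (s c₁ c₂ : ℝ) (hs : 0 < s) (hc₁ : 0 < c₁) (hc₂ : 0 < c₂)
    (a : ℕ → ℝ) (ha : ∀ n, 0 ≤ a n)
    (hlow : ∀ n : ℕ, 1 ≤ n → c₂ * (n : ℝ) ^ s ≤ a n)
    (hup : ∀ n : ℕ, 1 ≤ n → a n ≤ c₁ * (n : ℝ) ^ s)
    (L : ℕ) :
    Filter.Tendsto
      (fun Λ : ℕ =>
        (∑ n ∈ Finset.Icc (max 1 (Λ - L)) (Λ + L), a n) /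
          (∑ n ∈ Finset.Icc 1 Λ, a n))
      Filter.atTop (nhds 0) :=
  tendsto_div_of_le_mul_rpow_of_mul_rpow_mul_le (by positivity)
    (fun _ => sum_nonneg fun n _ => ha n)
    ((eventually_ge_atTop L).mono fun _ hL => sum_shell_le hs.le hc₁.le hup hL)
    (le_sum_ball hs.le hc₂.le ha hlow)
end

section
/- Let (I, e, N, ᾱ, d) be a fusion algebra datum with a proper length function ℓ, and assume the datum has strong polynomial growth of order s with respect to ℓ. For Λ ≥ 0 set A_Λ := {α ∈ I : ℓ(α) ≤ Λ}, for π ∈ I set ∂_π(A_Λ) := {α ∈ A_Λ : ∃β ∉ A_Λ with N_{α,π}^β ≠ 0} ∪ {β ∉ A_Λ : ∃α ∈ A_Λ with N_{β,π}^α ≠ 0}, and for a finite S ⊆ I set ∂_S(A_Λ) := ⋃_{π∈S} ∂_π(A_Λ). Then for every finite nonempty subset S ⊆ I and every ε > 0 there exists Λ₀ ∈ ℕ such that for every integer Λ ≥ Λ₀ one has ∑_{ξ ∈ ∂_S(A_Λ)} d(ξ)² < ε·∑_{ξ ∈ A_Λ} d(ξ)² (both sums are finite sums, since ℓ is proper).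 -/
/-- A fusion algebra datum on an index set `I`: a unit `e`, structure constants
`N`, a conjugation `bar`, and a dimension function `d`, satisfying finiteness
of fusion, the unit rules, Frobenius reciprocity and multiplicativity of `d`. -/
structure FusionData (I : Type*) where
  e : I
  N : I → I → I → ℕ
  bar : I → I
  d : I → ℝ
  N_fin : ∀ α β, (Function.support (N α β)).Finite
  bar_bar : ∀ α, bar (bar α) = α
  bar_e : bar e = e
  one_le_d : ∀ α, 1 ≤ d α
  d_bar : ∀ α, d (bar α) = d α
  N_unit_right : ∀ α, N α e α = 1
  N_unit_right' : ∀ α γ, γ ≠ α → N α e γ = 0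
  N_unit_left : ∀ α, N e α α = 1
  N_unit_left' : ∀ α γ, γ ≠ α → N e α γ = 0
  frob₁ : ∀ α β γ, N α β γ = N (bar α) γ β
  frob₂ : ∀ α β γ, N α β γ = N γ (bar β) α
  d_mul : ∀ α β, d α * d β = ∑ᶠ γ, (N α β γ : ℝ) * d γ

/-- A length function on a fusion algebra datum. -/
structure IsLength {I : Type*} (F : FusionData I) (ℓ : I → ℝ) : Prop where
  nonneg : ∀ α, 0 ≤ ℓ α
  map_e : ℓ F.e = 0
  map_bar : ∀ α, ℓ (F.bar α) = ℓ α
  subadd : ∀ α β γ, F.N α β γ ≠ 0 → ℓ γ ≤ ℓ α + ℓ β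

/-- A length function is proper if balls are finite and only `e` has length 0. -/
def IsProperLength {I : Type*} (F : FusionData I) (ℓ : I → ℝ) : Prop :=
  (∀ R : ℝ, 0 ≤ R → {α : I | ℓ α ≤ R}.Finite) ∧ ∀ α, ℓ α = 0 → α = F.e

/-- The fusion product `(f · ξ)(γ) = ∑_{α,β} f(α) ξ(β) N_{α,β}^γ`. -/
noncomputable def fmul {I : Type*} (F : FusionData I) (f ξ : I → ℂ) : I → ℂ :=
  fun γ => ∑ᶠ α, ∑ᶠ β, f α * ξ β * (F.N α β γ : ℂ)

/-- The weighted `ℓ²`-norm `‖ξ‖₂ = (∑_γ |ξ(γ)|² d(γ)²)^{1/2}`. -/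
noncomputable def norm2 {I : Type*} (F : FusionData I) (ξ : I → ℂ) : ℝ :=
  Real.sqrt (∑ᶠ γ, ‖ξ γ‖ ^ 2 * F.d γ ^ 2)

/-!
The boundary `∂_S(A_Λ)` lies in the annulus `Λ - M < ℓ ≤ Λ + M`, where `M` bounds `ℓ` on `S`:
this is subadditivity of `ℓ`, combined with Frobenius reciprocity for the outer part. Cutting
the annulus into `2M` unit shells, the upper growth bound gives it weight at most
`2M c₁ (2Λ)^s`, while `A_Λ` contains the shells between `Λ/2` and `Λ`, whose weight is at
least `c₂ (Λ/2)^(s+1)` by the lower growth bound. The ratio is `O(1/Λ)`.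
-/

open Set Filter

section ShellSums

variable {I : Type*} {ℓ w : I → ℝ}

lemma finsum_mem_le_finsum_mem_of_subset (hw : ∀ α, 0 ≤ w α) {s t : Set I} (hst : s ⊆ t)
    (ht : t.Finite) : ∑ᶠ α ∈ s, w α ≤ ∑ᶠ α ∈ t, w α := by
  rw [← finsum_mem_add_sdiff hst ht]
  exact le_add_of_nonneg_right (finsum_nonneg fun α => finsum_nonneg fun _ => hw α)

lemma finsum_mem_preimage_Ioc_eq_sum (hfin : ∀ n : ℕ, (ℓ ⁻¹' Iic (n : ℝ)).Finite) {a b : ℕ}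
    (hab : a ≤ b) :
    ∑ᶠ α ∈ ℓ ⁻¹' Ioc (a : ℝ) b, w α =
      ∑ n ∈ Finset.Ioc a b, ∑ᶠ α ∈ ℓ ⁻¹' Ioc ((n : ℝ) - 1) n, w α := by
  induction b, hab using Nat.le_induction with
  | base => simp
  | succ b hab ih =>
    have hfin' (x : ℝ) (m : ℕ) : (ℓ ⁻¹' Ioc x m).Finite := (hfin m).subset fun α hα => hα.2
    have hsplit : ℓ ⁻¹' Ioc (a : ℝ) (b + 1 : ℕ) =
        ℓ ⁻¹' Ioc (a : ℝ) b ∪ ℓ ⁻¹' Ioc (((b + 1 : ℕ) : ℝ) - 1) (b + 1 : ℕ) := by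
      rw [← preimage_union, Nat.cast_add_one, add_sub_cancel_right,
        Ioc_union_Ioc_eq_Ioc (by exact_mod_cast hab) (by linarith)]
    rw [hsplit, finsum_mem_union ((Ioc_disjoint_Ioc_of_le (by simp)).preimage ℓ) (hfin' _ _)
      (hfin' _ _), ih, Finset.sum_Ioc_succ_top hab]

variable {s c : ℝ}

lemma finsum_mem_preimage_Ioc_le (hfin : ∀ n : ℕ, (ℓ ⁻¹' Iic (n : ℝ)).Finite) (hs : 0 ≤ s)
    (hc : 0 ≤ c)
    (hshell : ∀ n : ℕ, 1 ≤ n → ∑ᶠ α ∈ ℓ ⁻¹' Ioc ((n : ℝ) - 1) n, w α ≤ c * (n : ℝ) ^ s)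
    {a b : ℕ} (hab : a ≤ b) :
    ∑ᶠ α ∈ ℓ ⁻¹' Ioc (a : ℝ) b, w α ≤ (b - a : ℕ) * (c * (b : ℝ) ^ s) := by
  rw [finsum_mem_preimage_Ioc_eq_sum hfin hab, ← Nat.card_Ioc, ← nsmul_eq_mul]
  refine Finset.sum_le_card_nsmul _ _ _ fun n hn => ?_
  obtain ⟨han, hnb⟩ := Finset.mem_Ioc.mp hn
  exact (hshell n (by omega)).trans (by gcongr)

lemma le_finsum_mem_preimage_Ioc (hfin : ∀ n : ℕ, (ℓ ⁻¹' Iic (n : ℝ)).Finite) (hs : 0 ≤ s)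
    (hc : 0 ≤ c)
    (hshell : ∀ n : ℕ, 1 ≤ n → c * (n : ℝ) ^ s ≤ ∑ᶠ α ∈ ℓ ⁻¹' Ioc ((n : ℝ) - 1) n, w α)
    {a b : ℕ} (hab : a ≤ b) :
    (b - a : ℕ) * (c * ((a : ℝ) + 1) ^ s) ≤ ∑ᶠ α ∈ ℓ ⁻¹' Ioc (a : ℝ) b, w α := by
  rw [finsum_mem_preimage_Ioc_eq_sum hfin hab, ← Nat.card_Ioc, ← nsmul_eq_mul]
  refine Finset.card_nsmul_le_sum _ _ _ fun n hn => ?_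
  obtain ⟨han, -⟩ := Finset.mem_Ioc.mp hn
  refine le_trans ?_ (hshell n (by omega))
  gcongr
  exact_mod_cast han

lemma le_finsum_mem_preimage_Iic (hw : ∀ α, 0 ≤ w α)
    (hfin : ∀ n : ℕ, (ℓ ⁻¹' Iic (n : ℝ)).Finite) (hs : 0 ≤ s) (hc : 0 ≤ c)
    (hshell : ∀ n : ℕ, 1 ≤ n → c * (n : ℝ) ^ s ≤ ∑ᶠ α ∈ ℓ ⁻¹' Ioc ((n : ℝ) - 1) n, w α)
    (Λ : ℕ) : c * ((Λ : ℝ) / 2) ^ (s + 1) ≤ ∑ᶠ α ∈ ℓ ⁻¹' Iic (Λ : ℝ), w α := by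
  have hfirst : (Λ : ℝ) / 2 ≤ (Λ - Λ / 2 : ℕ) := by
    rw [div_le_iff₀ two_pos]; exact_mod_cast (by omega : Λ ≤ (Λ - Λ / 2) * 2)
  have hlast : (Λ : ℝ) / 2 ≤ (Λ / 2 : ℕ) + 1 := by
    rw [div_le_iff₀ two_pos]; exact_mod_cast (by omega : Λ ≤ (Λ / 2 + 1) * 2)
  calc c * ((Λ : ℝ) / 2) ^ (s + 1) = (Λ : ℝ) / 2 * (c * ((Λ : ℝ) / 2) ^ s) := by
        rw [Real.rpow_add_one' (by positivity) (by linarith)]; ring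
    _ ≤ (Λ - Λ / 2 : ℕ) * (c * (((Λ / 2 : ℕ) : ℝ) + 1) ^ s) := by gcongr
    _ ≤ ∑ᶠ α ∈ ℓ ⁻¹' Ioc ((Λ / 2 : ℕ) : ℝ) Λ, w α :=
        le_finsum_mem_preimage_Ioc hfin hs hc hshell (Nat.div_le_self Λ 2)
    _ ≤ ∑ᶠ α ∈ ℓ ⁻¹' Iic (Λ : ℝ), w α :=
        finsum_mem_le_finsum_mem_of_subset hw (fun α hα => hα.2) (hfin Λ)

end ShellSums

lemma eventually_mul_rpow_lt_mul_rpow (K : ℝ) {c : ℝ} (hc : 0 < c) (s : ℝ) :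
    ∀ᶠ x : ℝ in atTop, K * (2 * x) ^ s < c * (x / 2) ^ (s + 1) := by
  filter_upwards [eventually_gt_atTop (max 0 (2 * K * 4 ^ s / c))] with x hx
  obtain ⟨hx0, hxK⟩ := max_lt_iff.mp hx
  have hpow : 0 < (x / 2) ^ s := by positivity
  have hK : K * 4 ^ s < c * (x / 2) := by
    rw [div_lt_iff₀ hc] at hxK; linarith
  calc K * (2 * x) ^ s = K * 4 ^ s * (x / 2) ^ s := by
        rw [mul_assoc, ← Real.mul_rpow (by norm_num) (by positivity)]; ring_nf
    _ < c * (x / 2) * (x / 2) ^ s := mul_lt_mul_of_pos_right hK hpow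
    _ = c * (x / 2) ^ (s + 1) := by rw [Real.rpow_add_one (by positivity)]; ring

namespace FusionData

variable {I : Type*} (F : FusionData I)

def boundary (ℓ : I → ℝ) (Λ : ℝ) (π : I) : Set I :=
  {α | ℓ α ≤ Λ ∧ ∃ β, ¬ ℓ β ≤ Λ ∧ F.N α π β ≠ 0} ∪
    {β | ¬ ℓ β ≤ Λ ∧ ∃ α, ℓ α ≤ Λ ∧ F.N β π α ≠ 0}

variable {F} {ℓ : I → ℝ}

lemma boundary_subset_preimage_Ioc (hℓ : IsLength F ℓ) {Λ r : ℝ} {π : I} (hπ : ℓ π ≤ r) :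
    F.boundary ℓ Λ π ⊆ ℓ ⁻¹' Ioc (Λ - r) (Λ + r) := by
  have hr : 0 ≤ r := (hℓ.nonneg π).trans hπ
  rintro ξ (⟨hξ, β, hβ, hN⟩ | ⟨hξ, α, hα, hN⟩)
  · have := hℓ.subadd ξ π β hN
    constructor <;> linarith
  · -- Frobenius reciprocity turns `N_{ξ,π}^α ≠ 0` into `N_{α,π̄}^ξ ≠ 0`.
    rw [← F.bar_bar π, ← F.frob₂] at hN
    have := hℓ.subadd α (F.bar π) ξ hN
    rw [hℓ.map_bar] at this
    constructor <;> linarith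

lemma finsum_mem_biUnion_boundary_le (hℓ : IsLength F ℓ) {w : I → ℝ} (hw : ∀ α, 0 ≤ w α)
    (hfin : ∀ n : ℕ, (ℓ ⁻¹' Iic (n : ℝ)).Finite) {s c : ℝ} (hs : 0 ≤ s) (hc : 0 ≤ c)
    (hshell : ∀ n : ℕ, 1 ≤ n → ∑ᶠ α ∈ ℓ ⁻¹' Ioc ((n : ℝ) - 1) n, w α ≤ c * (n : ℝ) ^ s)
    {S : Finset I} {M Λ : ℕ} (hM : ∀ π ∈ S, ℓ π ≤ M) (hMΛ : M ≤ Λ) :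
    ∑ᶠ ξ ∈ ⋃ π ∈ S, F.boundary ℓ Λ π, w ξ ≤ 2 * M * c * (2 * Λ : ℝ) ^ s := by
  have hsub : ⋃ π ∈ S, F.boundary ℓ Λ π ⊆ ℓ ⁻¹' Ioc ((Λ - M : ℕ) : ℝ) (Λ + M : ℕ) := by
    rw [Nat.cast_sub hMΛ, Nat.cast_add]
    exact iUnion₂_subset fun π hπ => boundary_subset_preimage_Ioc hℓ (hM π hπ)
  calc ∑ᶠ ξ ∈ ⋃ π ∈ S, F.boundary ℓ Λ π, w ξ
      ≤ ∑ᶠ ξ ∈ ℓ ⁻¹' Ioc ((Λ - M : ℕ) : ℝ) (Λ + M : ℕ), w ξ :=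
        finsum_mem_le_finsum_mem_of_subset hw hsub ((hfin _).subset fun α hα => hα.2)
    _ ≤ ((Λ + M) - (Λ - M) : ℕ) * (c * ((Λ + M : ℕ) : ℝ) ^ s) :=
        finsum_mem_preimage_Ioc_le hfin hs hc hshell (by omega)
    _ ≤ 2 * M * c * (2 * Λ : ℝ) ^ s := by
        rw [show Λ + M - (Λ - M) = 2 * M by omega]
        have : ((Λ + M : ℕ) : ℝ) ≤ 2 * Λ := by exact_mod_cast (by omega : Λ + M ≤ 2 * Λ)
        push_cast at this ⊢
        rw [← mul_assoc]
        gcongr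

end FusionData

theorem stmt_5_general {I : Type*} (F : FusionData I) (ℓ : I → ℝ) (hℓ : IsLength F ℓ)
    (hproper : IsProperLength F ℓ)
    (s c₁ c₂ : ℝ) (hs : 0 < s) (hc₁ : 0 < c₁) (hc₂ : 0 < c₂)
    (hlow : ∀ n : ℕ, 1 ≤ n →
      c₂ * (n : ℝ) ^ s ≤ ∑ᶠ α ∈ {α : I | (n : ℝ) - 1 < ℓ α ∧ ℓ α ≤ n}, F.d α ^ 2)
    (hup : ∀ n : ℕ, 1 ≤ n →
      ∑ᶠ α ∈ {α : I | (n : ℝ) - 1 < ℓ α ∧ ℓ α ≤ n}, F.d α ^ 2 ≤ c₁ * (n : ℝ) ^ s)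
    (S : Finset I) (ε : ℝ) (hε : 0 < ε) :
    ∃ Λ₀ : ℕ, ∀ Λ : ℕ, Λ₀ ≤ Λ →
      ∑ᶠ ξ ∈ (⋃ π ∈ S, ({α : I | ℓ α ≤ (Λ : ℝ) ∧ ∃ β : I, ¬ ℓ β ≤ (Λ : ℝ) ∧ F.N α π β ≠ 0} ∪
                        {β : I | ¬ ℓ β ≤ (Λ : ℝ) ∧ ∃ α : I, ℓ α ≤ (Λ : ℝ) ∧ F.N β π α ≠ 0})),
          F.d ξ ^ 2
        < ε * ∑ᶠ ξ ∈ {α : I | ℓ α ≤ (Λ : ℝ)}, F.d ξ ^ 2 := by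
  have hfin (n : ℕ) : (ℓ ⁻¹' Iic (n : ℝ)).Finite := hproper.1 n n.cast_nonneg
  have hw (α : I) : 0 ≤ F.d α ^ 2 := sq_nonneg _
  set M : ℕ := S.sup fun π => ⌈ℓ π⌉₊
  have hM (π : I) (hπ : π ∈ S) : ℓ π ≤ M :=
    (Nat.le_ceil _).trans (by exact_mod_cast Finset.le_sup (f := fun π => ⌈ℓ π⌉₊) hπ)
  obtain ⟨Λ₀, hΛ₀⟩ := eventually_atTop.mp <| tendsto_natCast_atTop_atTop.eventually <|
    eventually_mul_rpow_lt_mul_rpow (2 * M * c₁) (mul_pos hε hc₂) s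
  refine ⟨max M Λ₀, fun Λ hΛ => ?_⟩
  calc _ ≤ 2 * M * c₁ * (2 * Λ : ℝ) ^ s :=
        F.finsum_mem_biUnion_boundary_le hℓ hw hfin hs.le hc₁.le hup hM (le_of_max_le_left hΛ)
    _ < ε * c₂ * ((Λ : ℝ) / 2) ^ (s + 1) := hΛ₀ Λ (le_of_max_le_right hΛ)
    _ ≤ ε * ∑ᶠ ξ ∈ {α : I | ℓ α ≤ (Λ : ℝ)}, F.d ξ ^ 2 := by
        rw [mul_assoc]
        gcongr
        exact le_finsum_mem_preimage_Iic hw hfin hs.le hc₂.le hlow Λ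

/-- **Følner property.** For a fusion algebra datum with a proper
length function and strong polynomial growth of order `s`, for every finite
nonempty `S ⊆ I` and every `ε > 0`, eventually in `Λ` the weighted size of the
boundary `∂_S(A_Λ)` is less than `ε` times the weighted size of `A_Λ`. -/
theorem stmt_5 {I : Type*} (F : FusionData I) (ℓ : I → ℝ) (hℓ : IsLength F ℓ)
    (hproper : IsProperLength F ℓ)
    (s c₁ c₂ : ℝ) (hs : 0 < s) (hc₁ : 0 < c₁) (hc₂ : 0 < c₂)
    (hlow : ∀ n : ℕ, 1 ≤ n →
      c₂ * (n : ℝ) ^ s ≤ ∑ᶠ α ∈ {α : I | (n : ℝ) - 1 < ℓ α ∧ ℓ α ≤ n}, F.d α ^ 2)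
    (hup : ∀ n : ℕ, 1 ≤ n →
      ∑ᶠ α ∈ {α : I | (n : ℝ) - 1 < ℓ α ∧ ℓ α ≤ n}, F.d α ^ 2 ≤ c₁ * (n : ℝ) ^ s)
    (S : Finset I) (hS : S.Nonempty) (ε : ℝ) (hε : 0 < ε) :
    ∃ Λ₀ : ℕ, ∀ Λ : ℕ, Λ₀ ≤ Λ →
      ∑ᶠ ξ ∈ (⋃ π ∈ S, ({α : I | ℓ α ≤ (Λ : ℝ) ∧ ∃ β : I, ¬ ℓ β ≤ (Λ : ℝ) ∧ F.N α π β ≠ 0} ∪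
                        {β : I | ¬ ℓ β ≤ (Λ : ℝ) ∧ ∃ α : I, ℓ α ≤ (Λ : ℝ) ∧ F.N β π α ≠ 0})),
          F.d ξ ^ 2
        < ε * ∑ᶠ ξ ∈ {α : I | ℓ α ≤ (Λ : ℝ)}, F.d ξ ^ 2 :=
  stmt_5_general F ℓ hℓ hproper s c₁ c₂ hs hc₁ hc₂ hlow hup S ε hε
end

section
/- Let (I, e, N, ᾱ, d) be a fusion algebra datum. Then for every α ∈ I and every finitely supported ξ : I → ℂ one has ‖α · ξ‖₂ ≤ d(α)²·‖ξ‖₂, where (α · ξ)(γ) := ∑_β N_{α,β}^γ·ξ(β) (a finite sum) and ‖ξ‖₂ := (∑_γ |ξ(γ)|²·d(γ)²)^{1/2}. -/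
/-! Put `η β = ‖ξ β‖ * d β`, so that `‖ξ‖₂` is the plain `ℓ²`-norm of `η`. Whenever
`N_{α,β}^γ ≠ 0`, multiplicativity of `d` gives `d γ ≤ d α * d β`, hence
`‖(α · ξ) γ‖ * d γ ≤ d α * ∑_β N_{α,β}^γ * η β`. The nonnegative matrix `(N_{α,β}^γ)_{γ,β}`
has weighted row sums `∑_β N_{α,β}^γ d β = d α * d γ` (Frobenius reciprocity and `d ᾱ = d α`)
and weighted column sums `∑_γ N_{α,β}^γ d γ = d α * d β`, so by the Schur test with weight `d`
its `ℓ²` operator norm is at most `d α`. -/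

open Finset Function

theorem Finset.sum_le_finsum {ι M : Type*} [AddCommMonoid M] [PartialOrder M]
    [IsOrderedAddMonoid M] {f : ι → M} (hf : (support f).Finite) (hf₀ : ∀ i, 0 ≤ f i)
    (s : Finset ι) : ∑ i ∈ s, f i ≤ ∑ᶠ i, f i := by
  classical
  rw [finsum_eq_sum_of_support_subset f (s := s ∪ hf.toFinset) (by simp)]
  exact sum_le_sum_of_subset_of_nonneg subset_union_left fun i _ _ ↦ hf₀ i

-- Cauchy–Schwarz splits `K i j * x j` as `√(K i j * q j) * √(K i j / q j) * x j`.
theorem Finset.sum_sq_sum_mul_le_of_schur {ι κ : Type*} {s : Finset ι} {t : Finset κ}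
    {K : ι → κ → ℝ} {p : ι → ℝ} {q : κ → ℝ} {C₁ C₂ : ℝ} (hK : ∀ i ∈ s, ∀ j ∈ t, 0 ≤ K i j)
    (hq : ∀ j ∈ t, 0 < q j) (hC₁ : 0 ≤ C₁)
    (hrow : ∀ i ∈ s, ∑ j ∈ t, K i j * q j ≤ C₁ * p i)
    (hcol : ∀ j ∈ t, ∑ i ∈ s, K i j * p i ≤ C₂ * q j) (x : κ → ℝ) :
    ∑ i ∈ s, (∑ j ∈ t, K i j * x j) ^ 2 ≤ C₁ * C₂ * ∑ j ∈ t, x j ^ 2 := by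
  have hw : ∀ i ∈ s, ∀ j ∈ t, 0 ≤ K i j * (x j ^ 2 / q j) := fun i hi j hj ↦
    mul_nonneg (hK i hi j hj) (div_nonneg (sq_nonneg _) (hq j hj).le)
  calc ∑ i ∈ s, (∑ j ∈ t, K i j * x j) ^ 2
      ≤ ∑ i ∈ s, (∑ j ∈ t, K i j * q j) * ∑ j ∈ t, K i j * (x j ^ 2 / q j) := by
        gcongr with i hi
        refine sum_sq_le_sum_mul_sum_of_sq_le_mul t
          (fun j hj ↦ mul_nonneg (hK i hi j hj) (hq j hj).le) (hw i hi) fun j hj ↦ le_of_eq ?_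
        field_simp [(hq j hj).ne']
    _ ≤ ∑ i ∈ s, C₁ * p i * ∑ j ∈ t, K i j * (x j ^ 2 / q j) :=
        sum_le_sum fun i hi ↦ mul_le_mul_of_nonneg_right (hrow i hi) (sum_nonneg (hw i hi))
    _ = ∑ j ∈ t, C₁ * (x j ^ 2 / q j) * ∑ i ∈ s, K i j * p i := by
        simp_rw [mul_sum]
        rw [sum_comm]
        refine sum_congr rfl fun j _ ↦ sum_congr rfl fun i _ ↦ by ring
    _ ≤ ∑ j ∈ t, C₁ * (x j ^ 2 / q j) * (C₂ * q j) :=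
        sum_le_sum fun j hj ↦ mul_le_mul_of_nonneg_left (hcol j hj)
          (mul_nonneg hC₁ (div_nonneg (sq_nonneg _) (hq j hj).le))
    _ = C₁ * C₂ * ∑ j ∈ t, x j ^ 2 := by
        rw [mul_sum]
        refine sum_congr rfl fun j hj ↦ ?_
        field_simp [(hq j hj).ne']

namespace FusionData

variable {I : Type*} (F : FusionData I)

theorem d_pos (α : I) : 0 < F.d α :=
  one_pos.trans_le (F.one_le_d α)

theorem sum_N_mul_d_le (α β : I) (s : Finset I) :
    ∑ γ ∈ s, (F.N α β γ : ℝ) * F.d γ ≤ F.d α * F.d β := by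
  rw [F.d_mul]
  refine sum_le_finsum ((F.N_fin α β).subset fun γ hγ ↦ ?_)
    (fun γ ↦ mul_nonneg (Nat.cast_nonneg _) (F.d_pos γ).le) s
  exact fun h ↦ hγ (by simp [h])

theorem sum_N_mul_d_le_right (α γ : I) (s : Finset I) :
    ∑ β ∈ s, (F.N α β γ : ℝ) * F.d β ≤ F.d α * F.d γ := by
  simpa only [← F.frob₁, F.d_bar] using F.sum_N_mul_d_le (F.bar α) γ s

theorem d_le_mul_of_N_ne_zero {α β γ : I} (h : F.N α β γ ≠ 0) : F.d γ ≤ F.d α * F.d β :=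
  calc F.d γ ≤ (F.N α β γ : ℝ) * F.d γ :=
        le_mul_of_one_le_left (F.d_pos γ).le (mod_cast Nat.one_le_iff_ne_zero.mpr h)
    _ ≤ F.d α * F.d β := by simpa using F.sum_N_mul_d_le α β {γ}

theorem norm_sum_N_mul_mul_d_le (α γ : I) (s : Finset I) (ξ : I → ℂ) :
    ‖∑ β ∈ s, (F.N α β γ : ℂ) * ξ β‖ * F.d γ ≤
      F.d α * ∑ β ∈ s, (F.N α β γ : ℝ) * (‖ξ β‖ * F.d β) := by
  have hterm : ∀ β, (F.N α β γ : ℝ) * ‖ξ β‖ * F.d γ ≤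
      F.d α * ((F.N α β γ : ℝ) * (‖ξ β‖ * F.d β)) := by
    intro β
    obtain h | h := eq_or_ne (F.N α β γ) 0
    · simp [h]
    · exact (mul_le_mul_of_nonneg_left (F.d_le_mul_of_N_ne_zero h) (by positivity)).trans_eq
        (by ring)
  calc ‖∑ β ∈ s, (F.N α β γ : ℂ) * ξ β‖ * F.d γ
      ≤ (∑ β ∈ s, (F.N α β γ : ℝ) * ‖ξ β‖) * F.d γ := by
        refine mul_le_mul_of_nonneg_right ((norm_sum_le _ _).trans_eq ?_) (F.d_pos γ).le
        simp only [norm_mul, Complex.norm_natCast]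
    _ ≤ F.d α * ∑ β ∈ s, (F.N α β γ : ℝ) * (‖ξ β‖ * F.d β) := by
        rw [sum_mul, mul_sum]
        exact sum_le_sum fun β _ ↦ hterm β

theorem finsum_N_mul_eq_sum {ξ : I → ℂ} {s : Finset I} (hs : support ξ ⊆ s) (α γ : I) :
    ∑ᶠ β, (F.N α β γ : ℂ) * ξ β = ∑ β ∈ s, (F.N α β γ : ℂ) * ξ β :=
  finsum_eq_sum_of_support_subset _ ((support_mul_subset_right _ _).trans hs)

theorem finite_support_finsum_N_mul {ξ : I → ℂ} (hξ : (support ξ).Finite) (α : I) :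
    (support fun γ ↦ ∑ᶠ β, (F.N α β γ : ℂ) * ξ β).Finite := by
  refine (hξ.biUnion fun β _ ↦ F.N_fin α β).subset fun γ hγ ↦ ?_
  rw [mem_support, F.finsum_N_mul_eq_sum hξ.coe_toFinset.ge] at hγ
  obtain ⟨β, hβ, hne⟩ := exists_ne_zero_of_sum_ne_zero hγ
  exact Set.mem_biUnion (hξ.mem_toFinset.mp hβ) fun h ↦ hne (by simp [h])

theorem norm2_eq_sqrt_sum {ξ : I → ℂ} (hξ : (support ξ).Finite) :
    norm2 F ξ = √(∑ γ ∈ hξ.toFinset, (‖ξ γ‖ * F.d γ) ^ 2) := by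
  have : support (fun γ ↦ ‖ξ γ‖ ^ 2 * F.d γ ^ 2) ⊆ hξ.toFinset := fun γ hγ ↦
    hξ.mem_toFinset.mpr fun h ↦ hγ (by simp [h])
  simp_rw [norm2, finsum_eq_sum_of_support_subset _ this, mul_pow]

end FusionData

/-- Single-generator norm bound: `‖α · ξ‖₂ ≤ d(α)² ‖ξ‖₂` for
every `α ∈ I` and every finitely supported `ξ : I → ℂ`. -/
theorem stmt_6 {I : Type*} (F : FusionData I) (α : I) (ξ : I → ℂ)
    (hξ : (Function.support ξ).Finite) :
    norm2 F (fun γ => ∑ᶠ β, (F.N α β γ : ℂ) * ξ β) ≤ F.d α ^ 2 * norm2 F ξ := by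
  set S := hξ.toFinset
  have hS : support ξ ⊆ S := hξ.coe_toFinset.ge
  set T := (F.finite_support_finsum_N_mul hξ α).toFinset
  rw [F.norm2_eq_sqrt_sum (F.finite_support_finsum_N_mul hξ α), F.norm2_eq_sqrt_sum hξ,
    ← Real.sqrt_sq (sq_nonneg (F.d α)), ← Real.sqrt_mul (sq_nonneg _)]
  gcongr
  calc ∑ γ ∈ T, (‖∑ᶠ β, (F.N α β γ : ℂ) * ξ β‖ * F.d γ) ^ 2
      = ∑ γ ∈ T, (‖∑ β ∈ S, (F.N α β γ : ℂ) * ξ β‖ * F.d γ) ^ 2 := by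
        simp only [F.finsum_N_mul_eq_sum hS]
    _ ≤ ∑ γ ∈ T, (F.d α * ∑ β ∈ S, (F.N α β γ : ℝ) * (‖ξ β‖ * F.d β)) ^ 2 :=
        sum_le_sum fun γ _ ↦ pow_le_pow_left₀ (mul_nonneg (norm_nonneg _) (F.d_pos γ).le)
          (F.norm_sum_N_mul_mul_d_le α γ S ξ) 2
    _ = F.d α ^ 2 * ∑ γ ∈ T, (∑ β ∈ S, (F.N α β γ : ℝ) * (‖ξ β‖ * F.d β)) ^ 2 := by
        simp_rw [mul_pow, mul_sum]
    _ ≤ F.d α ^ 2 * (F.d α * F.d α * ∑ β ∈ S, (‖ξ β‖ * F.d β) ^ 2) := by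
        gcongr
        exact sum_sq_sum_mul_le_of_schur (fun _ _ _ _ ↦ Nat.cast_nonneg _)
          (fun β _ ↦ F.d_pos β) (F.d_pos α).le (fun γ _ ↦ F.sum_N_mul_d_le_right α γ S)
          (fun β _ ↦ F.sum_N_mul_d_le α β T) _
    _ = (F.d α ^ 2) ^ 2 * ∑ β ∈ S, (‖ξ β‖ * F.d β) ^ 2 := by ring
end

section
/- Let (I, e, N, ᾱ, d) be a fusion algebra datum with a length function ℓ. For finitely supported f : I → ℂ and k ∈ ℕ define δ^k(f) acting on finitely supported ξ : I → ℂ by (δ^k(f)ξ)(γ) := ∑_{α,β} (ℓ(γ) − ℓ(β))^k·f(α)·N_{α,β}^γ·ξ(β), and set f*(α) := conj(f(ᾱ)). Then for all finitely supported f, ξ, η : I → ℂ and every k ∈ ℕ: ∑_γ conj(η(γ))·(δ^k(f)ξ)(γ) = (−1)^k·∑_β conj((δ^k(f*)η)(β))·ξ(β). -/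
/-- The iterated Dirac commutator `δ^k(f)` acting on finitely supported `ξ`:
`(δ^k(f)ξ)(γ) = ∑_{α,β} (ℓ(γ) − ℓ(β))^k f(α) N_{α,β}^γ ξ(β)`. -/
noncomputable def deltaK {I : Type*} (F : FusionData I) (ℓ : I → ℝ) (k : ℕ)
    (f ξ : I → ℂ) : I → ℂ :=
  fun γ => ∑ᶠ α, ∑ᶠ β, ((ℓ γ - ℓ β : ℝ) : ℂ) ^ k * f α * (F.N α β γ : ℂ) * ξ β

/-- The adjoint function `f*(α) = conj (f(ᾱ))`. -/
noncomputable def fstar {I : Type*} (F : FusionData I) (f : I → ℂ) : I → ℂ :=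
  fun α => (starRingEnd ℂ) (f (F.bar α))

lemma deltaK_sum {I : Type*} (F : FusionData I) (ℓ : I → ℝ) (k : ℕ) (f ξ : I → ℂ)
    (A B : Finset I) (hA : Function.support f ⊆ A) (hB : Function.support ξ ⊆ B) (γ : I) :
    deltaK F ℓ k f ξ γ
      = ∑ α ∈ A, ∑ β ∈ B, ((ℓ γ - ℓ β : ℝ) : ℂ) ^ k * f α * (F.N α β γ : ℂ) * ξ β := by
  unfold deltaK
  have h1 : ∀ α : I, (∑ᶠ β, ((ℓ γ - ℓ β : ℝ) : ℂ) ^ k * f α * (F.N α β γ : ℂ) * ξ β)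
      = ∑ β ∈ B, ((ℓ γ - ℓ β : ℝ) : ℂ) ^ k * f α * (F.N α β γ : ℂ) * ξ β := by
    intro α
    refine finsum_eq_finset_sum_of_support_subset _ ?_
    intro β hβ
    refine hB ?_
    simp only [Function.mem_support] at hβ ⊢
    intro h; exact hβ (by simp [h])
  simp only [h1]
  refine finsum_eq_finset_sum_of_support_subset _ ?_
  intro α hα
  refine hA ?_
  simp only [Function.mem_support] at hα ⊢
  intro h
  apply hα
  apply Finset.sum_eq_zero
  intro β _
  simp [h]

/-- The adjoint identity `δ^k(f)* = (−1)^k δ^k(f*)`: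
`∑_γ conj(η(γ)) (δ^k(f)ξ)(γ) = (−1)^k ∑_β conj((δ^k(f*)η)(β)) ξ(β)`. -/
theorem stmt_10 {I : Type*} (F : FusionData I) (ℓ : I → ℝ) (hℓ : IsLength F ℓ)
    (f ξ η : I → ℂ) (hf : (Function.support f).Finite)
    (hξ : (Function.support ξ).Finite) (hη : (Function.support η).Finite)
    (k : ℕ) :
    ∑ᶠ γ, (starRingEnd ℂ) (η γ) * deltaK F ℓ k f ξ γ
      = (-1 : ℂ) ^ k * ∑ᶠ β, (starRingEnd ℂ) (deltaK F ℓ k (fstar F f) η β) * ξ β := by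
  classical
  set A := hf.toFinset with hA
  set B := hξ.toFinset with hB
  set C := hη.toFinset with hC
  have hAs : Function.support f ⊆ A := by simp [hA]
  have hBs : Function.support ξ ⊆ B := by simp [hB]
  have hCs : Function.support η ⊆ C := by simp [hC]
  have hbar_inj : Function.Injective F.bar := by
    intro a b h
    have := congrArg F.bar h
    rwa [F.bar_bar, F.bar_bar] at this
  have hA's : Function.support (fstar F f) ⊆ A.image F.bar := by
    intro α hα
    simp only [Function.mem_support, fstar] at hα
    have : f (F.bar α) ≠ 0 := fun h => hα (by simp [h])
    have hmem : F.bar α ∈ A := hAs this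
    refine Finset.mem_image.2 ⟨F.bar α, hmem, F.bar_bar α⟩
  -- LHS as finite sum
  have hLHS : (∑ᶠ γ, (starRingEnd ℂ) (η γ) * deltaK F ℓ k f ξ γ)
      = ∑ γ ∈ C, (starRingEnd ℂ) (η γ) *
          ∑ α ∈ A, ∑ β ∈ B, ((ℓ γ - ℓ β : ℝ) : ℂ) ^ k * f α * (F.N α β γ : ℂ) * ξ β := by
    rw [← finsum_eq_finset_sum_of_support_subset]
    · exact finsum_congr fun γ => by rw [deltaK_sum F ℓ k f ξ A B hAs hBs γ]
    · intro γ hγ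
      refine hCs ?_
      simp only [Function.mem_support] at hγ ⊢
      intro h; exact hγ (by simp [h])
  have hRHS : (∑ᶠ β, (starRingEnd ℂ) (deltaK F ℓ k (fstar F f) η β) * ξ β)
      = ∑ β ∈ B, (starRingEnd ℂ) (∑ α ∈ A.image F.bar, ∑ γ ∈ C,
          ((ℓ β - ℓ γ : ℝ) : ℂ) ^ k * fstar F f α * (F.N α γ β : ℂ) * η γ) * ξ β := by
    rw [← finsum_eq_finset_sum_of_support_subset]
    · exact finsum_congr fun β => by
        rw [deltaK_sum F ℓ k (fstar F f) η (A.image F.bar) C hA's hCs β]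
    · intro β hβ
      refine hBs ?_
      simp only [Function.mem_support] at hβ ⊢
      intro h; exact hβ (by simp [h])
  rw [hLHS, hRHS]
  -- reindex the image sum
  have hreindex : ∀ β : I, (∑ α ∈ A.image F.bar, ∑ γ ∈ C,
        ((ℓ β - ℓ γ : ℝ) : ℂ) ^ k * fstar F f α * (F.N α γ β : ℂ) * η γ)
      = ∑ α ∈ A, ∑ γ ∈ C,
        ((ℓ β - ℓ γ : ℝ) : ℂ) ^ k * (starRingEnd ℂ) (f α) * (F.N α β γ : ℂ) * η γ := by
    intro β
    rw [Finset.sum_image (fun a _ b _ h => hbar_inj h)]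
    refine Finset.sum_congr rfl fun α _ => Finset.sum_congr rfl fun γ _ => ?_
    rw [show fstar F f (F.bar α) = (starRingEnd ℂ) (f α) by simp [fstar, F.bar_bar],
        ← F.frob₁ α β γ]
  simp only [hreindex]
  simp only [map_sum, map_mul, map_pow, Complex.conj_ofReal, Complex.conj_natCast,
    RingHomCompTriple.comp_apply, RingHom.id_apply, Complex.conj_conj]
  have keyL : ∀ (g : I → I → I → ℂ),
      (∑ γ ∈ C, (starRingEnd ℂ) (η γ) * ∑ α ∈ A, ∑ β ∈ B, g γ α β)
        = ∑ α ∈ A, ∑ γ ∈ C, ∑ β ∈ B, (starRingEnd ℂ) (η γ) * g γ α β := by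
    intro g
    simp only [Finset.mul_sum]
    exact Finset.sum_comm
  have keyR : ∀ (g : I → I → I → ℂ),
      ((-1 : ℂ) ^ k * ∑ β ∈ B, (∑ α ∈ A, ∑ γ ∈ C, g β α γ) * ξ β)
        = ∑ α ∈ A, ∑ γ ∈ C, ∑ β ∈ B, (-1 : ℂ) ^ k * (g β α γ * ξ β) := by
    intro g
    rw [Finset.mul_sum]
    simp only [Finset.sum_mul, Finset.mul_sum]
    rw [Finset.sum_comm]
    exact Finset.sum_congr rfl fun α _ => Finset.sum_comm
  rw [keyL (fun γ α β => ((ℓ γ - ℓ β : ℝ) : ℂ) ^ k * f α * (F.N α β γ : ℂ) * ξ β),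
      keyR (fun β α γ => ((ℓ β - ℓ γ : ℝ) : ℂ) ^ k * f α * (F.N α β γ : ℂ) *
        (starRingEnd ℂ) (η γ))]
  refine Finset.sum_congr rfl fun α _ => Finset.sum_congr rfl fun γ _ =>
    Finset.sum_congr rfl fun β _ => ?_
  have hsign : (-1 : ℂ) ^ k * ((ℓ β - ℓ γ : ℝ) : ℂ) ^ k = ((ℓ γ - ℓ β : ℝ) : ℂ) ^ k := by
    rw [← neg_pow]
    congr 1
    push_cast
    ring
  calc (starRingEnd ℂ) (η γ) * (((ℓ γ - ℓ β : ℝ) : ℂ) ^ k * f α * (F.N α β γ : ℂ) * ξ β)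
      = ((-1 : ℂ) ^ k * ((ℓ β - ℓ γ : ℝ) : ℂ) ^ k) * f α * (F.N α β γ : ℂ) * ξ β *
        (starRingEnd ℂ) (η γ) := by rw [hsign]; ring
    _ = (-1 : ℂ) ^ k * (((ℓ β - ℓ γ : ℝ) : ℂ) ^ k * f α * (F.N α β γ : ℂ) *
        (starRingEnd ℂ) (η γ) * ξ β) := by ring
end

section
/- Let (I, e, N, ᾱ, d) be a fusion algebra datum with a proper length function ℓ, and let k ≥ 1 be an integer. For finitely supported f : I → ℂ define δ^k(f) acting on finitely supported ξ : I → ℂ by (δ^k(f)ξ)(γ) := ∑_{α,β} (ℓ(γ) − ℓ(β))^k·f(α)·N_{α,β}^γ·ξ(β). Then the following are equivalent: (i) δ^k(f)ξ = 0 for every finitely supported ξ : I → ℂ; (ii) f(α) = 0 for every α ≠ e. -/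
/-- For `k ≥ 1` and a proper length function, `δ^k(f)`
vanishes on all finitely supported `ξ` iff `f` is supported at the unit `e`. -/
theorem stmt_11 {I : Type*} (F : FusionData I) (ℓ : I → ℝ) (hℓ : IsLength F ℓ)
    (hproper : IsProperLength F ℓ) (k : ℕ) (hk : 1 ≤ k)
    (f : I → ℂ) (hf : (Function.support f).Finite) :
    (∀ ξ : I → ℂ, (Function.support ξ).Finite → deltaK F ℓ k f ξ = 0) ↔
      ∀ α : I, α ≠ F.e → f α = 0 := by
  classical
  constructor
  · intro h α hα
    set ξ : I → ℂ := fun β => if β = F.e then 1 else 0 with hξdef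
    have hξ : (Function.support ξ).Finite := by
      apply Set.Finite.subset (Set.finite_singleton F.e)
      intro x hx
      simp only [Function.mem_support, hξdef] at hx
      by_contra hxe
      simp only [Set.mem_singleton_iff] at hxe
      simp [hxe] at hx
    have h0 := congrFun (h ξ hξ) α
    have hinner : ∀ a : I, (∑ᶠ β, ((ℓ α - ℓ β : ℝ) : ℂ) ^ k * f a * (F.N a β α : ℂ) * ξ β)
        = ((ℓ α : ℝ) : ℂ) ^ k * f a * (F.N a F.e α : ℂ) := by
      intro a
      rw [finsum_eq_single _ F.e]
      · simp [hξdef, hℓ.map_e]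
      · intro b hb
        simp [hξdef, hb]
    have hval : deltaK F ℓ k f ξ α = ((ℓ α : ℝ) : ℂ) ^ k * f α := by
      unfold deltaK
      simp only [hinner]
      rw [finsum_eq_single _ α]
      · simp [F.N_unit_right]
      · intro a ha
        rw [F.N_unit_right' a α (Ne.symm ha)]
        simp
    rw [hval] at h0
    have hℓα : ℓ α ≠ 0 := fun h' => hα (hproper.2 α h')
    have : ((ℓ α : ℝ) : ℂ) ^ k ≠ 0 := by
      apply pow_ne_zero
      exact_mod_cast hℓα
    simpa [Pi.zero_apply, this] using h0
  · intro h ξ hξ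
    funext γ
    unfold deltaK
    rw [finsum_eq_single _ F.e]
    · rw [finsum_eq_zero_of_forall_eq_zero]
      · rfl
      · intro b
        by_cases hb : b = γ
        · subst hb
          simp [sub_self, zero_pow (Nat.one_le_iff_ne_zero.mp hk)]
        · rw [F.N_unit_left' b γ (Ne.symm hb)]
          simp
    · intro a ha
      rw [h a ha]
      simp
end

section
/- Let (I, e, N, ᾱ, d) be a fusion algebra datum with a proper length function ℓ, and assume there are constants C, s > 0 such that ‖f · ξ‖₂ ≤ C·‖f‖_{2,s}·‖ξ‖₂ for all finitely supported f, ξ : I → ℂ (rapid decay). Let k be an integer with k > s. Then the set B := {f : I → ℂ finitely supported : f(e) = 0 and ∑_α ℓ(α)^{2k}·|f(α)|²·d(α)² ≤ 1} is totally bounded with respect to the metric (f, g) ↦ ‖f − g‖_op, where ‖h‖_op := sup{‖h · ξ‖₂ : ξ finitely supported with ‖ξ‖₂ ≤ 1} (which is finite for every finitely supported h). That is, for every ε > 0 there exists a finite subset G ⊆ B such that every f ∈ B satisfies ‖f − g‖_op ≤ ε for some g ∈ G. -/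
/-- The weighted norm `‖f‖_{2,s} = (∑_α |f(α)|² d(α)² (1+ℓ(α))^{2s})^{1/2}`. -/
noncomputable def norm2s {I : Type*} (F : FusionData I) (ℓ : I → ℝ) (s : ℝ)
    (f : I → ℂ) : ℝ :=
  Real.sqrt (∑ᶠ α, ‖f α‖ ^ 2 * F.d α ^ 2 * (1 + ℓ α) ^ (2 * s))

/-- The operator norm of left fusion multiplication by `h`. -/
noncomputable def opNorm {I : Type*} (F : FusionData I) (h : I → ℂ) : ℝ :=
  ⨆ ξ : {ξ : I → ℂ // (Function.support ξ).Finite ∧ norm2 F ξ ≤ 1},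
    norm2 F (fmul F h (ξ : I → ℂ))


/-!
Rapid decay bounds the operator norm by `C ‖·‖_{2,s}`, so it suffices to find a finite
`‖·‖_{2,s}`-net of `B` inside `B`. Since `k > s`, beyond a large radius `R` the weight
`(1 + ℓ)^{2s}` is at most `K ℓ^{2k}` with `K` as small as we like, so for all `f, g ∈ B` the
part of `‖f - g‖_{2,s}²` outside the finite ball `{ℓ ≤ R}` is at most `4K`. On that ball, `B`
restricts to a bounded subset of a finite-dimensional space (`ℓ > 0` off `e` and `f(e) = 0`),
which is totally bounded.
-/

open Filter Function

theorem eventually_one_add_rpow_le_mul_rpow {a b η : ℝ} (ha : 0 ≤ a) (hab : a < b)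
    (hη : 0 < η) : ∀ᶠ x in atTop, (1 + x) ^ a ≤ η * x ^ b := by
  have hdecay : ∀ᶠ x in atTop, 2 ^ a * x ^ (-(b - a)) < η := by
    have h := (tendsto_rpow_neg_atTop (sub_pos.2 hab)).const_mul ((2 : ℝ) ^ a)
    rw [mul_zero] at h
    exact h.eventually (gt_mem_nhds hη)
  filter_upwards [hdecay, eventually_ge_atTop 1] with x hx hx1
  have hx0 : 0 < x := by linarith
  calc (1 + x) ^ a ≤ (2 * x) ^ a := Real.rpow_le_rpow (by linarith) (by linarith) ha
    _ = 2 ^ a * x ^ (-(b - a)) * x ^ b := by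
      rw [Real.mul_rpow zero_le_two hx0.le, mul_assoc, ← Real.rpow_add hx0]
      ring_nf
    _ ≤ η * x ^ b := by gcongr

theorem exists_finite_subset_forall_exists_dist_lt {X Y : Type*} [PseudoMetricSpace Y]
    {B : Set X} (ψ : X → Y) (hB : TotallyBounded (ψ '' B)) {δ : ℝ} (hδ : 0 < δ) :
    ∃ G ⊆ B, G.Finite ∧ ∀ f ∈ B, ∃ g ∈ G, dist (ψ f) (ψ g) < δ := by
  obtain ⟨G, hGB, hGfin, hcover⟩ :=
    Set.exists_subset_image_finite_and.1 (Metric.finite_approx_of_totallyBounded hB δ hδ)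
  refine ⟨G, hGB, hGfin, fun f hf => ?_⟩
  obtain ⟨_, ⟨g, hg, rfl⟩, hfg⟩ := Set.mem_iUnion₂.1 (hcover (Set.mem_image_of_mem ψ hf))
  exact ⟨g, hg, hfg⟩

section

variable {I : Type*} {F : FusionData I} {ℓ : I → ℝ}

theorem opNorm_le_of_rapidDecay {C s : ℝ} (hC : 0 ≤ C)
    (hRD : ∀ f ξ : I → ℂ, (support f).Finite → (support ξ).Finite →
      norm2 F (fmul F f ξ) ≤ C * norm2s F ℓ s f * norm2 F ξ)
    {h : I → ℂ} (hh : (support h).Finite) :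
    opNorm F h ≤ C * norm2s F ℓ s h := by
  have : Nonempty {ξ : I → ℂ // (support ξ).Finite ∧ norm2 F ξ ≤ 1} :=
    ⟨⟨0, by simp, by simp [norm2]⟩⟩
  refine ciSup_le fun ⟨ξ, hξfin, hξ⟩ => ?_
  calc norm2 F (fmul F h ξ) ≤ C * norm2s F ℓ s h * norm2 F ξ := hRD h ξ hh hξfin
    _ ≤ C * norm2s F ℓ s h :=
      mul_le_of_le_one_right (mul_nonneg hC (Real.sqrt_nonneg _)) hξ

variable (F ℓ) in
def lengthBall (k : ℕ) : Set (I → ℂ) :=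
  {f | (support f).Finite ∧ f F.e = 0 ∧ ∑ᶠ α, ℓ α ^ (2 * k) * ‖f α‖ ^ 2 * F.d α ^ 2 ≤ 1}

theorem norm_le_inv_of_mem_lengthBall (hℓ : ∀ α, 0 ≤ ℓ α) (hzero : ∀ α, ℓ α = 0 → α = F.e)
    {k : ℕ} {f : I → ℂ} (hf : f ∈ lengthBall F ℓ k) (α : I) :
    ‖f α‖ ≤ (ℓ α ^ k * F.d α)⁻¹ := by
  obtain ⟨hffin, hfe, hfsum⟩ := hf
  rcases (hℓ α).eq_or_lt with hα | hα
  · rw [hzero α hα.symm, hfe, norm_zero]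
    exact inv_nonneg.2 (mul_nonneg (pow_nonneg (hℓ _) _) (by linarith [F.one_le_d F.e]))
  have hterm : ℓ α ^ (2 * k) * ‖f α‖ ^ 2 * F.d α ^ 2 ≤ 1 := by
    refine (single_le_finsum α (hffin.subset ?_) fun β => ?_).trans hfsum
    · exact support_subset_iff'.2 fun β hβ => by simp [notMem_support.1 hβ]
    · exact mul_nonneg (mul_nonneg (pow_nonneg (hℓ β) _) (sq_nonneg _)) (sq_nonneg _)
  have hpos : 0 < ℓ α ^ k * F.d α := mul_pos (pow_pos hα k) (by linarith [F.one_le_d α])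
  have hsq : (‖f α‖ * (ℓ α ^ k * F.d α)) ^ 2 ≤ 1 := by
    calc _ = ℓ α ^ (2 * k) * ‖f α‖ ^ 2 * F.d α ^ 2 := by ring
      _ ≤ 1 := hterm
  rw [← one_div, le_div_iff₀ hpos]
  exact (pow_le_one_iff_of_nonneg (by positivity) two_ne_zero).1 hsq

theorem totallyBounded_restrict_lengthBall (hℓ : ∀ α, 0 ≤ ℓ α)
    (hzero : ∀ α, ℓ α = 0 → α = F.e) (k : ℕ) (T : Finset I) :
    TotallyBounded ((fun f (x : T) => f x) '' lengthBall F ℓ k) := by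
  refine (isCompact_univ_pi fun x : T =>
    isCompact_closedBall (0 : ℂ) (ℓ x ^ k * F.d x)⁻¹).totallyBounded.subset ?_
  rintro _ ⟨f, hf, rfl⟩ x -
  simpa using norm_le_inv_of_mem_lengthBall hℓ hzero hf x

theorem exists_finset_forall_notMem_one_add_rpow_le (hproper : IsProperLength F ℓ) {s : ℝ}
    (hs : 0 ≤ s) {k : ℕ} (hk : s < k) {K : ℝ} (hK : 0 < K) :
    ∃ T : Finset I, ∀ γ ∉ T, (1 + ℓ γ) ^ (2 * s) ≤ K * ℓ γ ^ (2 * k) := by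
  obtain ⟨R, hR⟩ := eventually_atTop.1 ((eventually_one_add_rpow_le_mul_rpow (a := 2 * s)
    (b := ((2 * k : ℕ) : ℝ)) (by positivity) (by push_cast; linarith) hK).and
    (eventually_ge_atTop 0))
  refine ⟨(hproper.1 R (hR R le_rfl).2).toFinset, fun γ hγ => ?_⟩
  have hRγ : R < ℓ γ := by simpa using hγ
  simpa only [Real.rpow_natCast] using (hR (ℓ γ) hRγ.le).1

theorem finsum_norm_sub_sq_weight_le (hℓ : ∀ α, 0 ≤ ℓ α) {k : ℕ} {f g : I → ℂ}
    (hf : f ∈ lengthBall F ℓ k) (hg : g ∈ lengthBall F ℓ k) {s K δ : ℝ} (hK : 0 ≤ K)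
    {T : Finset I} (htail : ∀ γ ∉ T, (1 + ℓ γ) ^ (2 * s) ≤ K * ℓ γ ^ (2 * k))
    (hclose : ∀ γ ∈ T, ‖f γ - g γ‖ ≤ δ) :
    ∑ᶠ γ, ‖(f - g) γ‖ ^ 2 * F.d γ ^ 2 * (1 + ℓ γ) ^ (2 * s) ≤
      δ ^ 2 * ∑ γ ∈ T, F.d γ ^ 2 * (1 + ℓ γ) ^ (2 * s) + 4 * K := by
  classical
  obtain ⟨hff, -, hfsum⟩ := hf
  obtain ⟨hgf, -, hgsum⟩ := hg
  set w : I → ℝ := fun γ => F.d γ ^ 2 * (1 + ℓ γ) ^ (2 * s)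
  set a : (I → ℂ) → I → ℝ := fun h γ => ℓ γ ^ (2 * k) * ‖h γ‖ ^ 2 * F.d γ ^ 2
  have hw : ∀ γ, 0 ≤ w γ := fun γ => mul_nonneg (sq_nonneg _) (by bound [hℓ γ])
  have ha : ∀ h γ, 0 ≤ a h γ := fun h γ =>
    mul_nonneg (mul_nonneg (pow_nonneg (hℓ γ) _) (sq_nonneg _)) (sq_nonneg _)
  set U := T ∪ (hff.toFinset ∪ hgf.toFinset)
  have hpoint : ∀ γ, ‖(f - g) γ‖ ^ 2 * w γ ≤
      δ ^ 2 * (if γ ∈ T then w γ else 0) + 2 * K * (a f γ + a g γ) := by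
    intro γ
    split_ifs with hγ
    · have : ‖(f - g) γ‖ ^ 2 ≤ δ ^ 2 := pow_le_pow_left₀ (norm_nonneg _) (hclose γ hγ) 2
      nlinarith [hw γ, ha f γ, ha g γ]
    · have hsub : ‖(f - g) γ‖ ^ 2 ≤ 2 * (‖f γ‖ ^ 2 + ‖g γ‖ ^ 2) := by
        have := norm_sub_le (f γ) (g γ)
        rw [Pi.sub_apply]
        nlinarith [norm_nonneg (f γ - g γ), sq_nonneg (‖f γ‖ - ‖g γ‖)]
      calc ‖(f - g) γ‖ ^ 2 * w γ ≤ 2 * (‖f γ‖ ^ 2 + ‖g γ‖ ^ 2) * w γ := by gcongr; exact hw γ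
        _ ≤ 2 * (‖f γ‖ ^ 2 + ‖g γ‖ ^ 2) * (F.d γ ^ 2 * (K * ℓ γ ^ (2 * k))) := by
          simp only [w]
          gcongr
          exact htail γ hγ
        _ = _ := by simp only [a]; ring
  have hsuppU : ∀ φ : I → ℝ, (∀ γ, f γ = 0 → g γ = 0 → φ γ = 0) → support φ ⊆ U := by
    intro φ hφ γ hγ
    simp only [U, Finset.coe_union, Set.Finite.coe_toFinset, Set.mem_union, mem_support,
      Finset.mem_coe]
    by_contra! h
    exact hγ (hφ γ h.2.1 h.2.2)
  rw [finsum_eq_sum_of_support_subset _ (hsuppU _ fun γ hf0 hg0 => by simp [hf0, hg0])]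
  rw [finsum_eq_sum_of_support_subset _ (hsuppU _ fun γ hf0 _ => by simp [hf0])] at hfsum
  rw [finsum_eq_sum_of_support_subset _ (hsuppU _ fun γ _ hg0 => by simp [hg0])] at hgsum
  calc ∑ γ ∈ U, ‖(f - g) γ‖ ^ 2 * F.d γ ^ 2 * (1 + ℓ γ) ^ (2 * s)
      = ∑ γ ∈ U, ‖(f - g) γ‖ ^ 2 * w γ := by simp only [w, mul_assoc]
    _ ≤ ∑ γ ∈ U, (δ ^ 2 * (if γ ∈ T then w γ else 0) + 2 * K * (a f γ + a g γ)) :=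
      Finset.sum_le_sum fun γ _ => hpoint γ
    _ = δ ^ 2 * ∑ γ ∈ T, w γ + 2 * K * (∑ γ ∈ U, a f γ + ∑ γ ∈ U, a g γ) := by
      rw [Finset.sum_add_distrib, ← Finset.mul_sum, ← Finset.mul_sum, Finset.sum_add_distrib,
        Finset.sum_ite_mem, Finset.inter_eq_right.2 Finset.subset_union_left]
    _ ≤ δ ^ 2 * ∑ γ ∈ T, w γ + 2 * K * (1 + 1) := by gcongr
    _ = _ := by ring

end

/-- Under rapid decay with exponent `s` and `k > s`, the unit
ball `B` of the seminorm `f ↦ (∑_α ℓ(α)^{2k} |f(α)|² d(α)²)^{1/2}` (intersected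
with `{f : f(e) = 0}`) is totally bounded for the operator-norm metric. -/
theorem stmt_12 {I : Type*} (F : FusionData I) (ℓ : I → ℝ) (hℓ : IsLength F ℓ)
    (hproper : IsProperLength F ℓ)
    (C s : ℝ) (hC : 0 < C) (hs : 0 < s)
    (hRD : ∀ f ξ : I → ℂ, (Function.support f).Finite →
      (Function.support ξ).Finite →
      norm2 F (fmul F f ξ) ≤ C * norm2s F ℓ s f * norm2 F ξ)
    (k : ℕ) (hk : s < (k : ℝ)) (ε : ℝ) (hε : 0 < ε) :
    ∃ G : Set (I → ℂ), G.Finite ∧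
      G ⊆ {f : I → ℂ | (Function.support f).Finite ∧ f F.e = 0 ∧
            ∑ᶠ α, ℓ α ^ (2 * k) * ‖f α‖ ^ 2 * F.d α ^ 2 ≤ 1} ∧
      ∀ f ∈ {f : I → ℂ | (Function.support f).Finite ∧ f F.e = 0 ∧
            ∑ᶠ α, ℓ α ^ (2 * k) * ‖f α‖ ^ 2 * F.d α ^ 2 ≤ 1},
        ∃ g ∈ G, opNorm F (f - g) ≤ ε := by
  set η := (ε / C) ^ 2 / 2 with hη_def
  obtain ⟨T, htail⟩ := exists_finset_forall_notMem_one_add_rpow_le hproper hs.le hk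
    (by positivity : 0 < η / 4)
  set W := ∑ γ ∈ T, F.d γ ^ 2 * (1 + ℓ γ) ^ (2 * s) with hW_def
  have hW : 0 ≤ W := Finset.sum_nonneg fun γ _ => by bound [hℓ.nonneg γ]
  set δ := Real.sqrt (η / (W + 1))
  have hδW : δ ^ 2 * W ≤ η := by
    rw [Real.sq_sqrt (by positivity), div_mul_eq_mul_div, div_le_iff₀ (by positivity)]
    nlinarith
  obtain ⟨G, hGB, hGfin, hG⟩ := exists_finite_subset_forall_exists_dist_lt _
    (totallyBounded_restrict_lengthBall hℓ.nonneg hproper.2 k T) (by positivity : 0 < δ)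
  refine ⟨G, hGfin, hGB, fun f hf => ?_⟩
  obtain ⟨g, hg, hfg⟩ := hG f hf
  have hclose : ∀ γ ∈ T, ‖f γ - g γ‖ ≤ δ := fun γ hγ =>
    dist_eq_norm (f γ) (g γ) ▸ (dist_le_pi_dist _ _ (⟨γ, hγ⟩ : T)).trans hfg.le
  have hsum := finsum_norm_sub_sq_weight_le hℓ.nonneg hf (hGB hg) (by positivity) htail hclose
  refine ⟨g, hg, ?_⟩
  calc opNorm F (f - g) ≤ C * norm2s F ℓ s (f - g) :=
        opNorm_le_of_rapidDecay hC.le hRD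
          ((hf.1.union (hGB hg).1).subset (Function.support_sub f g))
    _ ≤ C * Real.sqrt ((ε / C) ^ 2) := by
        gcongr
        exact Real.sqrt_le_sqrt (by rw [← hW_def] at hsum; linarith [hη_def])
    _ = ε := by rw [Real.sqrt_sq (by positivity), mul_div_cancel₀ _ hC.ne']
end

section
/- Let (I, e, N, ᾱ, d) be a fusion algebra datum with a length function ℓ taking values in the nonnegative integers. Let p ∈ ℕ and let f : I → ℂ be finitely supported with ℓ(α) ≤ p for every α in the support of f. If C ≥ 0 is such that ‖f · ξ‖₂ ≤ C·‖ξ‖₂ for all finitely supported ξ : I → ℂ, then ‖δ(f)ξ‖₂ ≤ p(p+1)·C·‖ξ‖₂ for all finitely supported ξ, where (δ(f)ξ)(γ) := ∑_{α,β} (ℓ(γ) − ℓ(β))·f(α)·N_{α,β}^γ·ξ(β), (f · ξ)(γ) := ∑_{α,β} f(α)·ξ(β)·N_{α,β}^γ, and ‖ξ‖₂ := (∑_γ |ξ(γ)|²·d(γ)²)^{1/2}. -/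
/-!
Grade `ℓ²(I)` by the integer length `L` and let `Pₙ` be the restriction to `{L = n}`. Frobenius
reciprocity makes a length function satisfy `|ℓ γ - ℓ β| ≤ ℓ α` whenever `N_{α,β}^γ ≠ 0`, so
`δ(f) = ∑_{|j| ≤ p} j Tⱼ`, where `Tⱼ = ∑ₙ P_{n+j} π(f) Pₙ` is the `j`-th band of the left
multiplication `π(f) ξ = f · ξ`. The summands of `Tⱼ ξ` live on distinct levels, hence
`‖Tⱼ ξ‖² = ∑ₙ ‖P_{n+j} π(f) Pₙ ξ‖² ≤ C² ∑ₙ ‖Pₙ ξ‖² = C² ‖ξ‖²`, and the triangle inequality gives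
`‖δ(f) ξ‖ ≤ C ‖ξ‖ ∑_{|j| ≤ p} |j| = p (p + 1) C ‖ξ‖`.
-/

open Function

theorem finsum_finsum_eq_sum_sum {ι κ M : Type*} [AddCommMonoid M] {A : Finset ι} {B : Finset κ}
    (g : ι → κ → M) (h : ∀ a b, g a b ≠ 0 → a ∈ A ∧ b ∈ B) :
    ∑ᶠ a, ∑ᶠ b, g a b = ∑ a ∈ A, ∑ b ∈ B, g a b := by
  rw [finsum_eq_finsetSum_of_support_subset _ (s := A)]
  · exact Finset.sum_congr rfl fun a _ =>
      finsum_eq_finsetSum_of_support_subset _ fun b hb => (h a b hb).2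
  · intro a ha
    by_contra haA
    exact ha (finsum_eq_zero_of_forall_eq_zero fun b => by_contra fun hb => haA (h a b hb).1)

theorem support_finsetSum_subset {ι α M : Type*} [AddCommMonoid M] (J : Finset ι)
    (g : ι → α → M) : support (∑ j ∈ J, g j) ⊆ ⋃ j ∈ J, support (g j) := by
  rw [Finset.sum_fn]
  exact Finset.support_sum J g

theorem exists_finset_support_subset {ι α M : Type*} [Zero M] (J : Finset ι) {g : ι → α → M}
    (hg : ∀ j ∈ J, (support (g j)).Finite) : ∃ Γ : Finset α, ⋃ j ∈ J, support (g j) ⊆ Γ :=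
  ⟨(J.finite_toSet.biUnion hg).toFinset, by simp⟩

theorem support_indicator_subset_support {α M : Type*} [Zero M] (s : Set α) (f : α → M) :
    support (s.indicator f) ⊆ support f :=
  Set.support_indicator.trans_subset Set.inter_subset_right

theorem sum_indicator_fiber_eq_self {α κ M : Type*} [DecidableEq κ] [AddCommMonoid M]
    (L : α → κ) {S : Finset κ} {ξ : α → M} (hS : ∀ β ∈ support ξ, L β ∈ S) :
    ∑ n ∈ S, {β | L β = n}.indicator ξ = ξ := by
  ext β
  simp only [Finset.sum_apply, Set.indicator_apply, Set.mem_ofPred_eq, Finset.sum_ite_eq]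
  split_ifs with hβ
  · rfl
  · exact (notMem_support.1 fun h => hβ (hS β h)).symm

theorem sum_abs_Icc_neg_self (p : ℕ) :
    ∑ j ∈ Finset.Icc (-(p : ℤ)) p, |(j : ℝ)| = p * (p + 1) := by
  induction p with
  | zero => simp
  | succ n ih =>
    have hIcc : Finset.Icc (-((n + 1 : ℕ) : ℤ)) (n + 1 : ℕ)
        = insert (-(n + 1 : ℤ)) (insert (n + 1 : ℤ) (Finset.Icc (-(n : ℤ)) n)) := by
      ext
      simp only [Finset.mem_Icc, Finset.mem_insert]
      push_cast
      omega
    have hneg : -(n + 1 : ℤ) ∉ insert (n + 1 : ℤ) (Finset.Icc (-(n : ℤ)) n) := by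
      simp only [Finset.mem_insert, Finset.mem_Icc]
      omega
    rw [hIcc, Finset.sum_insert hneg, Finset.sum_insert (by simp), ih]
    push_cast
    rw [abs_neg, abs_of_nonneg (by positivity)]
    ring

section Norm

variable {I : Type*} (F : FusionData I)

theorem norm2_nonneg (ξ : I → ℂ) : 0 ≤ norm2 F ξ :=
  Real.sqrt_nonneg _

theorem norm2_eq_sqrt_sum {ξ : I → ℂ} {Γ : Finset I} (hΓ : support ξ ⊆ Γ) :
    norm2 F ξ = √(∑ γ ∈ Γ, ‖ξ γ‖ ^ 2 * F.d γ ^ 2) := by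
  rw [norm2, finsum_eq_finsetSum_of_support_subset]
  exact fun γ hγ => hΓ fun h => hγ (by simp [h])

theorem norm2_sq_eq_sum {ξ : I → ℂ} {Γ : Finset I} (hΓ : support ξ ⊆ Γ) :
    norm2 F ξ ^ 2 = ∑ γ ∈ Γ, ‖ξ γ‖ ^ 2 * F.d γ ^ 2 := by
  rw [norm2_eq_sqrt_sum F hΓ, Real.sq_sqrt (by positivity)]

theorem norm2_eq_norm_euclidean {ξ : I → ℂ} {Γ : Finset I} (hΓ : support ξ ⊆ Γ) :
    norm2 F ξ = ‖(WithLp.toLp 2 fun γ : Γ => (F.d γ : ℂ) * ξ γ : EuclideanSpace ℂ Γ)‖ := by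
  rw [norm2_eq_sqrt_sum F hΓ, EuclideanSpace.norm_eq, ← Finset.sum_coe_sort Γ]
  congr! 2 with γ
  rw [norm_mul, Complex.norm_real, Real.norm_of_nonneg (zero_le_one.trans (F.one_le_d γ))]
  ring

theorem norm2_sum_smul_le {ι : Type*} (J : Finset ι) (c : ι → ℂ) {g : ι → I → ℂ}
    (hg : ∀ j ∈ J, (support (g j)).Finite) :
    norm2 F (∑ j ∈ J, c j • g j) ≤ ∑ j ∈ J, ‖c j‖ * norm2 F (g j) := by
  obtain ⟨Γ, hΓ⟩ := exists_finset_support_subset J hg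
  have hgΓ : ∀ j ∈ J, support (g j) ⊆ Γ := fun j hj => (Set.subset_biUnion_of_mem hj).trans hΓ
  have hsum : support (∑ j ∈ J, c j • g j) ⊆ Γ :=
    (support_finsetSum_subset J _).trans
      (Set.iUnion₂_subset fun j hj => (support_const_smul_subset _ _).trans (hgΓ j hj))
  rw [norm2_eq_norm_euclidean F hsum]
  calc _ = ‖∑ j ∈ J, c j •
          (WithLp.toLp 2 fun γ : Γ => (F.d γ : ℂ) * g j γ : EuclideanSpace ℂ Γ)‖ := by
        congr 1
        ext γ
        simp [Finset.sum_apply, Finset.mul_sum, mul_left_comm]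
    _ ≤ _ := (norm_sum_le _ _).trans (Finset.sum_le_sum fun j hj => by
        rw [norm_smul, norm2_eq_norm_euclidean F (hgΓ j hj)])

theorem norm2_le_of_norm_le {ζ ξ : I → ℂ} (hξ : (support ξ).Finite) (h : ∀ γ, ‖ζ γ‖ ≤ ‖ξ γ‖) :
    norm2 F ζ ≤ norm2 F ξ := by
  have hζ : support ζ ⊆ hξ.toFinset := fun γ hγ => by
    simpa using fun h0 => hγ (norm_eq_zero.1 (by simpa [h0] using h γ))
  rw [norm2_eq_sqrt_sum F hζ, norm2_eq_sqrt_sum F (Γ := hξ.toFinset) (by simp)]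
  gcongr with γ
  exact h γ

theorem norm2_indicator_le (s : Set I) {ξ : I → ℂ} (hξ : (support ξ).Finite) :
    norm2 F (s.indicator ξ) ≤ norm2 F ξ :=
  norm2_le_of_norm_le F hξ (norm_indicator_le_norm_self ξ)

theorem norm2_sq_sum_indicator_fiber {κ : Type*} [DecidableEq κ] (L : I → κ) (S : Finset κ)
    {g : κ → I → ℂ} (hg : ∀ n ∈ S, (support (g n)).Finite) :
    norm2 F (∑ n ∈ S, {γ | L γ = n}.indicator (g n)) ^ 2
      = ∑ n ∈ S, norm2 F ({γ | L γ = n}.indicator (g n)) ^ 2 := by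
  obtain ⟨Γ, hΓ⟩ := exists_finset_support_subset S hg
  have hgΓ : ∀ n ∈ S, support ({γ | L γ = n}.indicator (g n)) ⊆ Γ := fun n hn =>
    (support_indicator_subset_support _ _).trans ((Set.subset_biUnion_of_mem hn).trans hΓ)
  rw [norm2_sq_eq_sum F ((support_finsetSum_subset S _).trans (Set.iUnion₂_subset hgΓ)),
    Finset.sum_congr rfl fun n hn => norm2_sq_eq_sum F (hgΓ n hn), Finset.sum_comm]
  refine Finset.sum_congr rfl fun γ _ => ?_
  simp only [Finset.sum_apply, Set.indicator_apply, Set.mem_ofPred_eq, Finset.sum_ite_eq,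
    apply_ite (fun z : ℂ => ‖z‖ ^ 2 * F.d γ ^ 2), norm_zero]
  simp

end Norm

section Band

variable {I : Type*}

/-- `band L j A` is the `j`-th band `∑ₙ P_{n+j} A Pₙ` of `A`, where `Pₙ` restricts to `{L = n}`. -/
noncomputable def band (L : I → ℤ) (j : ℤ) (A : (I → ℂ) → I → ℂ) (ξ : I → ℂ) : I → ℂ :=
  fun γ => A ({β | L γ - L β = j}.indicator ξ) γ

theorem band_eq_sum_indicator_fiber (L : I → ℤ) (j : ℤ) {A : (I → ℂ) → I → ℂ} (hA0 : A 0 = 0)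
    {ξ : I → ℂ} {S : Finset ℤ} (hS : ∀ β ∈ support ξ, L β ∈ S) :
    band L j A ξ = ∑ n ∈ S, {γ | L γ - j = n}.indicator (A ({β | L β = n}.indicator ξ)) := by
  ext γ
  simp only [band, Finset.sum_apply, Set.indicator_apply (s := {γ | L γ - j = _}),
    Set.mem_ofPred_eq, Finset.sum_ite_eq]
  split_ifs with hγ
  · congr 2
    ext β
    simp only [Set.mem_ofPred_eq]
    omega
  · have hempty : {β | L γ - L β = j}.indicator ξ = 0 := by
      ext β
      simp only [Set.indicator_apply, Set.mem_ofPred_eq, Pi.zero_apply]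
      split_ifs with hβ
      · exact notMem_support.1 fun h => hγ (by convert hS β h using 1; omega)
      · rfl
    rw [hempty, hA0, Pi.zero_apply]

variable {A : (I → ℂ) → I → ℂ} {ξ : I → ℂ}

theorem support_band_finite (hA0 : A 0 = 0)
    (hA : ∀ η : I → ℂ, (support η).Finite → (support (A η)).Finite)
    (hξ : (support ξ).Finite) (L : I → ℤ) (j : ℤ) : (support (band L j A ξ)).Finite := by
  classical
  rw [band_eq_sum_indicator_fiber L j hA0 (S := hξ.toFinset.image L)
    fun β hβ => Finset.mem_image_of_mem L (hξ.mem_toFinset.2 hβ), Finset.sum_fn]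
  exact HasFiniteSupport.sum (fun n =>
    (hA _ (hξ.subset (support_indicator_subset_support _ _))).subset
      (support_indicator_subset_support _ _)) _

theorem norm2_band_le (F : FusionData I) (hA0 : A 0 = 0)
    (hA : ∀ η : I → ℂ, (support η).Finite → (support (A η)).Finite) {C : ℝ}
    (hAC : ∀ η : I → ℂ, (support η).Finite → norm2 F (A η) ≤ C * norm2 F η)
    (hξ : (support ξ).Finite) (L : I → ℤ) (j : ℤ) : norm2 F (band L j A ξ) ≤ C * norm2 F ξ := by
  classical
  set S := hξ.toFinset.image L
  have hS : ∀ β ∈ support ξ, L β ∈ S := fun β hβ =>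
    Finset.mem_image_of_mem L (hξ.mem_toFinset.2 hβ)
  have hpart : ∀ n, (support ({β | L β = n}.indicator ξ)).Finite := fun n =>
    hξ.subset (support_indicator_subset_support _ _)
  have hC : 0 ≤ C * norm2 F ξ := (norm2_nonneg F _).trans (hAC ξ hξ)
  rw [← pow_le_pow_iff_left₀ (norm2_nonneg F _) hC two_ne_zero,
    band_eq_sum_indicator_fiber L j hA0 hS,
    norm2_sq_sum_indicator_fiber F (fun γ => L γ - j) S fun n _ => hA _ (hpart n)]
  calc ∑ n ∈ S, norm2 F ({γ | L γ - j = n}.indicator (A ({β | L β = n}.indicator ξ))) ^ 2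
      ≤ ∑ n ∈ S, (C * norm2 F ({β | L β = n}.indicator ξ)) ^ 2 := by
        gcongr with n
        · exact norm2_nonneg F _
        · exact (norm2_indicator_le F _ (hA _ (hpart n))).trans (hAC _ (hpart n))
    _ = C ^ 2 * norm2 F (∑ n ∈ S, {β | L β = n}.indicator ξ) ^ 2 := by
        rw [norm2_sq_sum_indicator_fiber F L S fun n _ => hξ, Finset.mul_sum]
        simp only [mul_pow]
    _ = (C * norm2 F ξ) ^ 2 := by rw [sum_indicator_fiber_eq_self L hS, mul_pow]

end Band

theorem IsLength.abs_sub_le {I : Type*} {F : FusionData I} {ℓ : I → ℝ} (hℓ : IsLength F ℓ)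
    {α β γ : I} (h : F.N α β γ ≠ 0) : |ℓ γ - ℓ β| ≤ ℓ α := by
  have h₁ := hℓ.subadd α β γ h
  have h₂ := hℓ.subadd (F.bar α) γ β (F.frob₁ α β γ ▸ h)
  rw [hℓ.map_bar] at h₂
  exact abs_sub_le_iff.2 ⟨by linarith, by linarith⟩

section Fusion

variable {I : Type*} (F : FusionData I)

theorem fmul_apply_eq_sum {f η : I → ℂ} {A B : Finset I} (hf : support f ⊆ A)
    (hη : support η ⊆ B) (γ : I) :
    fmul F f η γ = ∑ α ∈ A, ∑ β ∈ B, f α * η β * (F.N α β γ : ℂ) :=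
  finsum_finsum_eq_sum_sum _ fun _ _ h =>
    ⟨hf (left_ne_zero_of_mul (left_ne_zero_of_mul h)),
      hη (right_ne_zero_of_mul (left_ne_zero_of_mul h))⟩

theorem fmul_zero (f : I → ℂ) : fmul F f 0 = 0 := by
  ext γ
  simp [fmul]

theorem support_fmul_finite {f : I → ℂ} (hf : (support f).Finite) (η : I → ℂ)
    (hη : (support η).Finite) : (support (fmul F f η)).Finite := by
  refine (hf.biUnion fun α _ => hη.biUnion fun β _ => F.N_fin α β).subset fun γ hγ => ?_
  rw [mem_support, fmul_apply_eq_sum F (A := hf.toFinset) (B := hη.toFinset) (by simp) (by simp)]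
    at hγ
  obtain ⟨α, hα, hαγ⟩ := Finset.exists_ne_zero_of_sum_ne_zero hγ
  obtain ⟨β, hβ, hβγ⟩ := Finset.exists_ne_zero_of_sum_ne_zero hαγ
  simp only [Set.mem_iUnion]
  exact ⟨α, by simpa using hα, β, by simpa using hβ, by exact_mod_cast right_ne_zero_of_mul hβγ⟩

theorem deltaK_one_eq_sum_band {ℓ : I → ℝ} (hℓ : IsLength F ℓ) {L : I → ℤ}
    (hL : ∀ α, ℓ α = L α) {p : ℕ} {f : I → ℂ} (hf : (support f).Finite)
    (hsupp : ∀ α, f α ≠ 0 → ℓ α ≤ p) {ξ : I → ℂ} (hξ : (support ξ).Finite) :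
    deltaK F ℓ 1 f ξ = ∑ j ∈ Finset.Icc (-(p : ℤ)) p, (j : ℂ) • band L j (fmul F f) ξ := by
  classical
  ext γ
  have hA : support f ⊆ hf.toFinset := by simp
  have hB : support ξ ⊆ hξ.toFinset := by simp
  have hterm (j : ℤ) : ((j : ℂ) • band L j (fmul F f) ξ) γ = ∑ α ∈ hf.toFinset,
      ∑ β ∈ hξ.toFinset, (j : ℂ) * (f α * {β | L γ - L β = j}.indicator ξ β * (F.N α β γ : ℂ)) := by
    rw [Pi.smul_apply, smul_eq_mul, band,
      fmul_apply_eq_sum F hA ((support_indicator_subset_support _ _).trans hB)]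
    simp only [Finset.mul_sum]
  simp only [deltaK]
  rw [finsum_finsum_eq_sum_sum (A := hf.toFinset) (B := hξ.toFinset) _
      fun α β h => ⟨hA (right_ne_zero_of_mul (left_ne_zero_of_mul (left_ne_zero_of_mul h))),
        hB (right_ne_zero_of_mul h)⟩,
    Finset.sum_apply, Finset.sum_congr rfl fun j _ => hterm j,
    Finset.sum_comm (s := Finset.Icc _ _)]
  refine Finset.sum_congr rfl fun α _ => ?_
  rw [Finset.sum_comm (s := Finset.Icc _ _)]
  refine Finset.sum_congr rfl fun β _ => ?_
  simp only [Set.indicator_apply, Set.mem_ofPred_eq, mul_ite, ite_mul, mul_zero, zero_mul,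
    Finset.sum_ite_eq]
  split_ifs with hj
  · push_cast [hL]
    ring
  · have hzero : f α = 0 ∨ F.N α β γ = 0 := by
      by_contra! h
      have hjump := (hℓ.abs_sub_le h.2).trans (hsupp α h.1)
      rw [hL, hL] at hjump
      exact hj (Finset.mem_Icc.2 (abs_le.1 (by exact_mod_cast hjump)))
    rcases hzero with h | h <;> simp [h]

end Fusion

theorem stmt_14_general {I : Type*} (F : FusionData I) (ℓ : I → ℝ) (hℓ : IsLength F ℓ)
    (hint : ∀ α : I, ∃ n : ℕ, ℓ α = n)
    (p : ℕ) (f : I → ℂ) (hf : (Function.support f).Finite)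
    (hsupp : ∀ α : I, f α ≠ 0 → ℓ α ≤ p)
    (C : ℝ)
    (hbound : ∀ ξ : I → ℂ, (Function.support ξ).Finite →
      norm2 F (fmul F f ξ) ≤ C * norm2 F ξ) :
    ∀ ξ : I → ℂ, (Function.support ξ).Finite →
      norm2 F (deltaK F ℓ 1 f ξ) ≤ (p : ℝ) * (p + 1) * C * norm2 F ξ := by
  intro ξ hξ
  obtain ⟨L, hL⟩ : ∃ L : I → ℤ, ∀ α, ℓ α = L α :=
    ⟨fun α => (hint α).choose, fun α => by simpa using (hint α).choose_spec⟩
  have hfmul := support_fmul_finite F hf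
  rw [deltaK_one_eq_sum_band F hℓ hL hf hsupp hξ]
  calc _ ≤ ∑ j ∈ Finset.Icc (-(p : ℤ)) p, ‖(j : ℂ)‖ * norm2 F (band L j (fmul F f) ξ) :=
        norm2_sum_smul_le F _ _ fun j _ => support_band_finite (fmul_zero F f) hfmul hξ L j
    _ ≤ ∑ j ∈ Finset.Icc (-(p : ℤ)) p, |(j : ℝ)| * (C * norm2 F ξ) := by
        gcongr with j
        · exact norm2_nonneg F _
        · exact (Complex.norm_intCast j).le
        · exact norm2_band_le F (fmul_zero F f) hfmul hbound hξ L j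
    _ = (p : ℝ) * (p + 1) * C * norm2 F ξ := by
        rw [← Finset.sum_mul, sum_abs_Icc_neg_self]
        ring

/-- If `ℓ` is integer-valued, `f` is supported on
`{α : ℓ α ≤ p}`, and left multiplication by `f` is bounded by `C`, then the
commutator `δ(f)` is bounded by `p(p+1) C`. -/
theorem stmt_14 {I : Type*} (F : FusionData I) (ℓ : I → ℝ) (hℓ : IsLength F ℓ)
    (hint : ∀ α : I, ∃ n : ℕ, ℓ α = n)
    (p : ℕ) (f : I → ℂ) (hf : (Function.support f).Finite)
    (hsupp : ∀ α : I, f α ≠ 0 → ℓ α ≤ p)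
    (C : ℝ) (hC : 0 ≤ C)
    (hbound : ∀ ξ : I → ℂ, (Function.support ξ).Finite →
      norm2 F (fmul F f ξ) ≤ C * norm2 F ξ) :
    ∀ ξ : I → ℂ, (Function.support ξ).Finite →
      norm2 F (deltaK F ℓ 1 f ξ) ≤ (p : ℝ) * (p + 1) * C * norm2 F ξ :=
  stmt_14_general F ℓ hℓ hint p f hf hsupp C hbound
end
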